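/- Let κ₁ > 0, κ₂ ≠ 0, κ₁ + 4κ₂ > 0, and let G_j = -(1/2π)∫_{-π}^{π} 2sin²(ξj/2)/(4κ₂sin²ξ + 4κ₁sin²(ξ/2)) dξ. Then for every j ∈ ℤ with j ≠ 0: -κ₂(G_{j+2} - 2G_j + G_{j-2}) - κ₁(G_{j+1} - 2G_j + G_{j-1}) = 0, and for j = 0 the left-hand side equals 1. -/
import Mathlib


open Real

/-- The regularized one-dimensional lattice Green's function. -/
noncomputable def latticeGreen (κ₁ κ₂ : ℝ) (j : ℤ) : ℝ :=
  -(1 / (2 * π)) * ∫ ξ in (-π)..π,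
    2 * Real.sin (ξ * (j : ℝ) / 2) ^ 2 /
      (4 * κ₂ * Real.sin ξ ^ 2 + 4 * κ₁ * Real.sin (ξ / 2) ^ 2)

section helpers
open MeasureTheory intervalIntegral

lemma sin_half_sq (x : ℝ) : Real.sin (x/2)^2 = (1 - Real.cos x)/2 := by
  have h := Real.cos_two_mul (x/2)
  have h2 : 2*(x/2) = x := by ring
  have h3 := Real.sin_sq_add_cos_sq (x/2)
  rw [h2] at h; linarith

lemma abs_sin_nat_mul (n : ℕ) (x : ℝ) : |Real.sin (n*x)| ≤ n * |Real.sin x| := by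
  induction n with
  | zero => simp
  | succ n ih =>
    have e : ((n+1:ℕ):ℝ)*x = n*x + x := by push_cast; ring
    rw [e, Real.sin_add]
    calc |Real.sin (n*x) * Real.cos x + Real.cos (n*x) * Real.sin x|
        ≤ |Real.sin (n*x) * Real.cos x| + |Real.cos (n*x) * Real.sin x| := abs_add_le _ _
      _ ≤ |Real.sin (n*x)| + |Real.sin x| := by
          rw [abs_mul, abs_mul]
          have := Real.abs_cos_le_one x
          have := Real.abs_cos_le_one (n*x)
          have := abs_nonneg (Real.sin (n*x))
          have := abs_nonneg (Real.sin x)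
          nlinarith
      _ ≤ (n:ℝ)*|Real.sin x| + |Real.sin x| := by linarith
      _ = ((n+1:ℕ):ℝ)*|Real.sin x| := by push_cast; ring

lemma abs_sin_int_mul (j : ℤ) (x : ℝ) : |Real.sin (j*x)| ≤ |(j:ℝ)| * |Real.sin x| := by
  rcases le_or_gt 0 j with hj | hj
  · lift j to ℕ using hj with n
    simpa using abs_sin_nat_mul n x
  · obtain ⟨n, hn⟩ : ∃ n : ℕ, j = -(n:ℤ) := ⟨(-j).toNat, by omega⟩
    subst hn
    push_cast
    rw [neg_mul, Real.sin_neg, abs_neg, abs_neg]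
    simpa using abs_sin_nat_mul n x

lemma sin_eq_double (ξ : ℝ) : Real.sin ξ = 2 * Real.sin (ξ/2) * Real.cos (ξ/2) := by
  have h : 2*(ξ/2) = ξ := by ring
  calc Real.sin ξ = Real.sin (2*(ξ/2)) := congrArg Real.sin h.symm
    _ = 2 * Real.sin (ξ/2) * Real.cos (ξ/2) := Real.sin_two_mul _

lemma sin_sq_eq (ξ : ℝ) :
    Real.sin ξ^2 = 4 * Real.sin (ξ/2)^2 * (1 - Real.sin (ξ/2)^2) := by
  have hpy := Real.sin_sq_add_cos_sq (ξ/2)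
  rw [sin_eq_double]
  linear_combination (4*Real.sin (ξ/2)^2) * hpy

lemma den_lb (κ₁ κ₂ : ℝ) (hκ₁ : 0 < κ₁) (hκ : 0 < κ₁ + 4*κ₂) (ξ : ℝ) :
    4 * min κ₁ (κ₁ + 4*κ₂) * Real.sin (ξ/2)^2 ≤
      4*κ₂*Real.sin ξ^2 + 4*κ₁*Real.sin (ξ/2)^2 := by
  have hpy := Real.sin_sq_add_cos_sq (ξ/2)
  have h1 : (0:ℝ) ≤ 1 - Real.sin (ξ/2)^2 := by nlinarith [sq_nonneg (Real.cos (ξ/2))]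
  rw [sin_sq_eq ξ]
  rcases le_or_gt 0 κ₂ with h2 | h2
  · have hm := min_le_left κ₁ (κ₁+4*κ₂)
    nlinarith [mul_nonneg h2 (mul_nonneg (sq_nonneg (Real.sin (ξ/2))) h1),
      mul_nonneg (sub_nonneg.2 hm) (sq_nonneg (Real.sin (ξ/2)))]
  · have hm := min_le_right κ₁ (κ₁+4*κ₂)
    nlinarith [mul_nonneg (sub_nonneg.2 hm) (sq_nonneg (Real.sin (ξ/2))),
      mul_nonneg (neg_nonneg.2 h2.le) (sq_nonneg (Real.sin (ξ/2)^2))]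

lemma integrable_f (κ₁ κ₂ : ℝ) (hκ₁ : 0 < κ₁) (hκ : 0 < κ₁+4*κ₂) (j : ℤ) :
    IntervalIntegrable (fun ξ => 2*Real.sin (ξ*(j:ℝ)/2)^2 /
      (4*κ₂*Real.sin ξ^2 + 4*κ₁*Real.sin (ξ/2)^2)) volume (-π) π := by
  set m := min κ₁ (κ₁+4*κ₂) with hmdef
  have hm : 0 < m := lt_min hκ₁ hκ
  rw [intervalIntegrable_iff]
  have hmble : AEStronglyMeasurable (fun ξ : ℝ => 2*Real.sin (ξ*(j:ℝ)/2)^2 /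
      (4*κ₂*Real.sin ξ^2 + 4*κ₁*Real.sin (ξ/2)^2)) volume := by
    have hnum : Continuous fun ξ : ℝ => 2*Real.sin (ξ*(j:ℝ)/2)^2 := by fun_prop
    have hden : Continuous fun ξ : ℝ => 4*κ₂*Real.sin ξ^2 + 4*κ₁*Real.sin (ξ/2)^2 := by
      fun_prop
    exact (hnum.measurable.div hden.measurable).aestronglyMeasurable
  apply MeasureTheory.Measure.integrableOn_of_bounded (M := ((j:ℝ))^2/(2*m))
    (measure_Ioc_lt_top).ne hmble
  have h0 : ∀ᵐ ξ : ℝ ∂(volume.restrict (Set.uIoc (-π) π)), ξ ≠ 0 := by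
    apply ae_restrict_of_ae
    rw [ae_iff]
    have e : {x : ℝ | ¬ x ≠ 0} = {0} := by ext x; simp
    rw [e]; exact measure_singleton 0
  have hmem := ae_restrict_mem (μ := volume) (measurableSet_uIoc (a := -π) (b := π))
  filter_upwards [h0, hmem] with ξ hξ0 hξmem
  rw [Set.uIoc_of_le (by linarith [pi_pos] : -π ≤ π)] at hξmem
  have hl : -π < ξ/2 := by linarith [hξmem.1, pi_pos]
  have hr : ξ/2 < π := by linarith [hξmem.2, pi_pos]
  have hs : Real.sin (ξ/2) ≠ 0 := by
    intro h
    exact hξ0 (by have := (Real.sin_eq_zero_iff_of_lt_of_lt hl hr).1 h; linarith)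
  have hs2 : 0 < Real.sin (ξ/2)^2 :=
    lt_of_le_of_ne (sq_nonneg _) (Ne.symm (pow_ne_zero 2 hs))
  have hlb := den_lb κ₁ κ₂ hκ₁ hκ ξ
  have hD : 0 < 4*κ₂*Real.sin ξ^2 + 4*κ₁*Real.sin (ξ/2)^2 :=
    lt_of_lt_of_le (by positivity) hlb
  have hn : Real.sin (ξ*(j:ℝ)/2)^2 ≤ (j:ℝ)^2 * Real.sin (ξ/2)^2 := by
    have h := abs_sin_int_mul j (ξ/2)
    have e : (j:ℝ)*(ξ/2) = ξ*(j:ℝ)/2 := by ring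
    rw [e] at h
    nlinarith [abs_nonneg (Real.sin (ξ*(j:ℝ)/2)), sq_abs (Real.sin (ξ*(j:ℝ)/2)),
      sq_abs ((j:ℝ)), sq_abs (Real.sin (ξ/2)), abs_nonneg (Real.sin (ξ/2)),
      abs_nonneg ((j:ℝ))]
  rw [Real.norm_eq_abs, abs_of_nonneg (div_nonneg (by positivity) hD.le)]
  rw [div_le_div_iff₀ hD (by positivity)]
  nlinarith [mul_le_mul_of_nonneg_left hn (by positivity : (0:ℝ) ≤ 4*m),
    mul_le_mul_of_nonneg_left hlb (sq_nonneg (j:ℝ))]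

lemma num_identity (κ₁ κ₂ ξ : ℝ) (j : ℝ) :
    -κ₂*(2*Real.sin (ξ*(j+2)/2)^2 - 2*(2*Real.sin (ξ*j/2)^2) + 2*Real.sin (ξ*(j-2)/2)^2)
    - κ₁*(2*Real.sin (ξ*(j+1)/2)^2 - 2*(2*Real.sin (ξ*j/2)^2) + 2*Real.sin (ξ*(j-1)/2)^2)
    = -Real.cos (j*ξ) * (4*κ₂*Real.sin ξ^2 + 4*κ₁*Real.sin (ξ/2)^2) := by
  simp only [sin_half_sq]
  have e2 : ξ*(j+2) = j*ξ + 2*ξ := by ring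
  have em2 : ξ*(j-2) = j*ξ - 2*ξ := by ring
  have e1 : ξ*(j+1) = j*ξ + ξ := by ring
  have em1 : ξ*(j-1) = j*ξ - ξ := by ring
  have e0 : ξ*j = j*ξ := by ring
  rw [e2, em2, e1, em1, e0, Real.cos_add, Real.cos_sub, Real.cos_add, Real.cos_sub,
    Real.cos_two_mul, Real.sin_sq ξ]
  ring

lemma pointwise (κ₁ κ₂ ξ : ℝ) (j : ℝ)
    (hD : 4*κ₂*Real.sin ξ^2 + 4*κ₁*Real.sin (ξ/2)^2 ≠ 0) :
    -κ₂*(2*Real.sin (ξ*(j+2)/2)^2 / (4*κ₂*Real.sin ξ^2 + 4*κ₁*Real.sin (ξ/2)^2)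
          - 2*(2*Real.sin (ξ*j/2)^2 / (4*κ₂*Real.sin ξ^2 + 4*κ₁*Real.sin (ξ/2)^2))
          + 2*Real.sin (ξ*(j-2)/2)^2 / (4*κ₂*Real.sin ξ^2 + 4*κ₁*Real.sin (ξ/2)^2))
    - κ₁*(2*Real.sin (ξ*(j+1)/2)^2 / (4*κ₂*Real.sin ξ^2 + 4*κ₁*Real.sin (ξ/2)^2)
          - 2*(2*Real.sin (ξ*j/2)^2 / (4*κ₂*Real.sin ξ^2 + 4*κ₁*Real.sin (ξ/2)^2))
          + 2*Real.sin (ξ*(j-1)/2)^2 / (4*κ₂*Real.sin ξ^2 + 4*κ₁*Real.sin (ξ/2)^2))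
    = -Real.cos (j*ξ) := by
  have h := num_identity κ₁ κ₂ ξ j
  set D := 4*κ₂*Real.sin ξ^2 + 4*κ₁*Real.sin (ξ/2)^2 with hd
  calc -κ₂*(2*Real.sin (ξ*(j+2)/2)^2 / D - 2*(2*Real.sin (ξ*j/2)^2 / D)
          + 2*Real.sin (ξ*(j-2)/2)^2 / D)
      - κ₁*(2*Real.sin (ξ*(j+1)/2)^2 / D - 2*(2*Real.sin (ξ*j/2)^2 / D)
          + 2*Real.sin (ξ*(j-1)/2)^2 / D)
      = (-κ₂*(2*Real.sin (ξ*(j+2)/2)^2 - 2*(2*Real.sin (ξ*j/2)^2) + 2*Real.sin (ξ*(j-2)/2)^2)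
        - κ₁*(2*Real.sin (ξ*(j+1)/2)^2 - 2*(2*Real.sin (ξ*j/2)^2) + 2*Real.sin (ξ*(j-1)/2)^2)) / D := by
        ring
    _ = (-Real.cos (j*ξ) * D) / D := by rw [h]
    _ = -Real.cos (j*ξ) := by
        rw [mul_div_assoc, div_self hD, mul_one]

lemma green_key (κ₁ κ₂ : ℝ) (hκ₁ : 0 < κ₁) (hκ : 0 < κ₁ + 4*κ₂) (j : ℤ) :
    -κ₂ * (latticeGreen κ₁ κ₂ (j + 2) - 2 * latticeGreen κ₁ κ₂ j +
        latticeGreen κ₁ κ₂ (j - 2)) -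
      κ₁ * (latticeGreen κ₁ κ₂ (j + 1) - 2 * latticeGreen κ₁ κ₂ j +
        latticeGreen κ₁ κ₂ (j - 1)) =
    (1/(2*π)) * ∫ ξ in (-π)..π, Real.cos ((j:ℝ)*ξ) := by
  have hi : ∀ k : ℤ, IntervalIntegrable (fun ξ => 2*Real.sin (ξ*(k:ℝ)/2)^2 /
      (4*κ₂*Real.sin ξ^2 + 4*κ₁*Real.sin (ξ/2)^2)) volume (-π) π :=
    integrable_f κ₁ κ₂ hκ₁ hκ
  set f : ℤ → ℝ → ℝ := fun k ξ => 2*Real.sin (ξ*(k:ℝ)/2)^2 /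
      (4*κ₂*Real.sin ξ^2 + 4*κ₁*Real.sin (ξ/2)^2) with hf
  set I : ℤ → ℝ := fun k => ∫ ξ in (-π)..π, f k ξ with hI
  have hG : ∀ k : ℤ, latticeGreen κ₁ κ₂ k = -(1/(2*π)) * I k := fun k => rfl
  have hA : IntervalIntegrable (fun ξ => f (j+2) ξ - 2 * f j ξ + f (j-2) ξ)
      volume (-π) π := ((hi (j+2)).sub ((hi j).const_mul 2)).add (hi (j-2))
  have hB : IntervalIntegrable (fun ξ => f (j+1) ξ - 2 * f j ξ + f (j-1) ξ)
      volume (-π) π := ((hi (j+1)).sub ((hi j).const_mul 2)).add (hi (j-1))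
  have hcomb : (∫ ξ in (-π)..π, (-κ₂ * (f (j+2) ξ - 2 * f j ξ + f (j-2) ξ)
        - κ₁ * (f (j+1) ξ - 2 * f j ξ + f (j-1) ξ)))
      = -κ₂ * (I (j+2) - 2 * I j + I (j-2)) - κ₁ * (I (j+1) - 2 * I j + I (j-1)) := by
    rw [intervalIntegral.integral_sub (hA.const_mul (-κ₂)) (hB.const_mul κ₁),
      intervalIntegral.integral_const_mul, intervalIntegral.integral_const_mul,
      intervalIntegral.integral_add ((hi (j+2)).sub ((hi j).const_mul 2)) (hi (j-2)),
      intervalIntegral.integral_sub (hi (j+2)) ((hi j).const_mul 2),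
      intervalIntegral.integral_const_mul,
      intervalIntegral.integral_add ((hi (j+1)).sub ((hi j).const_mul 2)) (hi (j-1)),
      intervalIntegral.integral_sub (hi (j+1)) ((hi j).const_mul 2),
      intervalIntegral.integral_const_mul]
  have hae : (∫ ξ in (-π)..π, (-κ₂ * (f (j+2) ξ - 2 * f j ξ + f (j-2) ξ)
        - κ₁ * (f (j+1) ξ - 2 * f j ξ + f (j-1) ξ)))
      = ∫ ξ in (-π)..π, -Real.cos ((j:ℝ)*ξ) := by
    apply intervalIntegral.integral_congr_ae
    have h0 : ∀ᵐ ξ : ℝ ∂volume, ξ ≠ 0 := by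
      rw [ae_iff]
      have e : {x : ℝ | ¬ x ≠ 0} = {0} := by ext x; simp
      rw [e]; exact measure_singleton 0
    filter_upwards [h0] with ξ hξ0 hξmem
    rw [Set.uIoc_of_le (by linarith [pi_pos] : -π ≤ π)] at hξmem
    have hl : -π < ξ/2 := by linarith [hξmem.1, pi_pos]
    have hr : ξ/2 < π := by linarith [hξmem.2, pi_pos]
    have hs : Real.sin (ξ/2) ≠ 0 := by
      intro h
      exact hξ0 (by have := (Real.sin_eq_zero_iff_of_lt_of_lt hl hr).1 h; linarith)
    have hs2 : 0 < Real.sin (ξ/2)^2 :=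
      lt_of_le_of_ne (sq_nonneg _) (Ne.symm (pow_ne_zero 2 hs))
    have hm : 0 < min κ₁ (κ₁+4*κ₂) := lt_min hκ₁ hκ
    have hD : 4*κ₂*Real.sin ξ^2 + 4*κ₁*Real.sin (ξ/2)^2 ≠ 0 :=
      (lt_of_lt_of_le (by positivity) (den_lb κ₁ κ₂ hκ₁ hκ ξ)).ne'
    have hp := pointwise κ₁ κ₂ ξ (j:ℝ) hD
    simp only [hf]
    push_cast
    exact hp
  have hS : -κ₂ * (I (j+2) - 2 * I j + I (j-2)) - κ₁ * (I (j+1) - 2 * I j + I (j-1))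
      = -∫ x in (-π)..π, Real.cos ((j:ℝ)*x) := by
    rw [← hcomb, hae, intervalIntegral.integral_neg]
  rw [hG (j+2), hG j, hG (j-2), hG (j+1), hG (j-1)]
  linear_combination (-(1/(2*π))) * hS

end helpers

theorem green_function_equation (κ₁ κ₂ : ℝ)
    (hκ₁ : κ₁ > 0) (hκ₂ : κ₂ ≠ 0) (hκ : κ₁ + 4 * κ₂ > 0) :
    (∀ j : ℤ, j ≠ 0 →
      -κ₂ * (latticeGreen κ₁ κ₂ (j + 2) - 2 * latticeGreen κ₁ κ₂ j +
          latticeGreen κ₁ κ₂ (j - 2)) -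
        κ₁ * (latticeGreen κ₁ κ₂ (j + 1) - 2 * latticeGreen κ₁ κ₂ j +
          latticeGreen κ₁ κ₂ (j - 1)) = 0) ∧
    -κ₂ * (latticeGreen κ₁ κ₂ 2 - 2 * latticeGreen κ₁ κ₂ 0 +
        latticeGreen κ₁ κ₂ (-2)) -
      κ₁ * (latticeGreen κ₁ κ₂ 1 - 2 * latticeGreen κ₁ κ₂ 0 +
        latticeGreen κ₁ κ₂ (-1)) = 1 := by
  constructor
  · intro j hj
    rw [green_key κ₁ κ₂ hκ₁ hκ j]
    have hc : ((j:ℝ)) ≠ 0 := Int.cast_ne_zero.mpr hj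
    rw [intervalIntegral.integral_comp_mul_left (fun x => Real.cos x) hc, integral_cos]
    have h1 : Real.sin ((j:ℝ)*π) = 0 := Real.sin_int_mul_pi j
    have h2 : Real.sin ((j:ℝ)*(-π)) = 0 := by rw [mul_neg, Real.sin_neg, h1, neg_zero]
    rw [h1, h2]
    simp
  · have h := green_key κ₁ κ₂ hκ₁ hκ 0
    norm_num at h
    rw [neg_mul, h]
    have hπ := Real.pi_ne_zero
    field_simp
    ring
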